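/- arXiv:2105.01851 — 8 statements merged into one kernel-verified Lean document; each statement's English description precedes it below -/
import Mathlib

section
/- Let B_0 = B_{0,s} + B_{0,n} be the Jordan–Chevalley decomposition of B_0 ∈ M_{r×r}(ℂ) into commuting semisimple and nilpotent parts, and suppose a family of matrices B_k ∈ M_{r×r}(ℂ) (k ≥ 1) satisfies ad(B_{0,s})(B_k) = k B_k for every k ≥ 1, with only finitely many B_k nonzero. Then the set of eigenvalues of B(1) := ∑_{k≥0} B_k equals the set of eigenvalues of B_0 (counted with multiplicity). -/
/-!
Conjugate so that `S` is the diagonal matrix `diagonal d`. Since `B 0` commutes with `S`, its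
entry `(i, j)` vanishes unless `d i = d j`, while for `k ≥ 1` the relation `ad S (B k) = k • B k`
forces the entry `(i, j)` of `B k` to vanish unless `d i - d j = k`, in which case
`Re (d i) > Re (d j)`. Ordering indices by `-Re d`, `B 0` is block triangular and `∑ k ≥ 1, B k`
is strictly block triangular, so adding it changes neither the diagonal blocks nor the
characteristic polynomial.
-/

open Matrix

namespace Matrix

variable {n : Type*} [Fintype n] [DecidableEq n]

theorem charpoly_add_eq_of_blockTriangular {R α : Type*} [CommRing R] [LinearOrder α]
    {M E : Matrix n n R} {b : n → α} (hM : M.BlockTriangular b)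
    (hE : ∀ i j, b j ≤ b i → E i j = 0) : (M + E).charpoly = M.charpoly := by
  have hE' : E.BlockTriangular b := fun i j hij => hE i j hij.le
  rw [(hM.add hE').charpoly, hM.charpoly]
  refine Finset.prod_congr rfl fun a _ => congrArg charpoly ?_
  ext ⟨i, hi⟩ ⟨j, hj⟩
  simp [toSquareBlock_def, hE i j (hj.trans hi.symm).le]

theorem apply_eq_zero_of_diagonal_mul_sub_mul_diagonal_eq_smul {R : Type*} [CommRing R]
    [NoZeroDivisors R] {d : n → R} {X : Matrix n n R} {c : R}
    (hX : diagonal d * X - X * diagonal d = c • X) {i j : n} (hij : d i - d j ≠ c) :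
    X i j = 0 := by
  have hentry := congrFun (congrFun hX i) j
  simp only [sub_apply, diagonal_mul, mul_diagonal, smul_apply, smul_eq_mul] at hentry
  have : (d i - d j - c) * X i j = 0 := by linear_combination hentry
  exact (mul_eq_zero.mp this).resolve_left (sub_ne_zero.mpr hij)

theorem apply_eq_zero_of_commute_diagonal {R : Type*} [CommRing R] [NoZeroDivisors R]
    {d : n → R} {X : Matrix n n R} (hX : Commute (diagonal d) X) {i j : n} (hij : d i ≠ d j) :
    X i j = 0 :=
  apply_eq_zero_of_diagonal_mul_sub_mul_diagonal_eq_smul (c := 0)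
    (by rw [hX.eq, sub_self, zero_smul]) (sub_ne_zero.mpr hij)

theorem charpoly_sum_range_eq_of_diagonal {d : n → ℂ} {B : ℕ → Matrix n n ℂ}
    (h₀ : Commute (diagonal d) (B 0))
    (had : ∀ k : ℕ, 1 ≤ k → diagonal d * B k - B k * diagonal d = (k : ℂ) • B k) (K : ℕ) :
    (∑ k ∈ Finset.range (K + 1), B k).charpoly = (B 0).charpoly := by
  rw [Finset.sum_range_succ', add_comm]
  refine charpoly_add_eq_of_blockTriangular (b := fun i => -(d i).re) ?_ ?_
  · intro i j hij
    exact apply_eq_zero_of_commute_diagonal h₀ fun hd => hij.ne (by simp [hd])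
  · intro i j hij
    rw [sum_apply]
    refine Finset.sum_eq_zero fun k _ => ?_
    refine apply_eq_zero_of_diagonal_mul_sub_mul_diagonal_eq_smul (had (k + 1) k.succ_pos) ?_
    intro hd
    have hre := congrArg Complex.re hd
    simp only [Complex.sub_re, Complex.natCast_re] at hre
    push_cast at hre
    linarith

end Matrix

theorem eigenvalues_of_levelt_sum_general
    (r : ℕ) (B : ℕ → Matrix (Fin r) (Fin r) ℂ)
    (S N : Matrix (Fin r) (Fin r) ℂ)
    (hB0 : B 0 = S + N)
    (hSN : S * N = N * S)
    (hS : ∃ P D : Matrix (Fin r) (Fin r) ℂ, IsUnit P ∧ D.IsDiag ∧ S = P * D * P⁻¹)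
    (K : ℕ) (hfin : ∀ k, K ≤ k → B k = 0)
    (had : ∀ k : ℕ, 1 ≤ k → S * B k - B k * S = (k : ℂ) • B k) :
    (∑ k ∈ Finset.range K, B k).charpoly = (B 0).charpoly := by
  obtain ⟨P, D, hP, hD, rfl⟩ := hS
  let c := MulSemiringAction.toAlgEquiv ℂ (Matrix (Fin r) (Fin r) ℂ) (ConjAct.toConjAct hP.unit⁻¹)
  have hc : ∀ X, c X = P⁻¹ * X * P := fun X => by
    simp [c, MulSemiringAction.toAlgEquiv_apply, ConjAct.units_smul_def]
  have hcS : c (P * D * P⁻¹) = diagonal D.diag := by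
    have hdet : IsUnit P.det := (isUnit_iff_isUnit_det P).mp hP
    rw [hc, hD.diagonal_diag]
    simp only [mul_assoc, nonsing_inv_mul _ hdet, mul_one, nonsing_inv_mul_cancel_left _ _ hdet]
  have h₀ : Commute (diagonal D.diag) (c (B 0)) := by
    rw [hB0, map_add, ← hcS]
    exact (Commute.refl _).add_right ((show Commute _ N from hSN).map c)
  have had_diag : ∀ k : ℕ, 1 ≤ k →
      diagonal D.diag * c (B k) - c (B k) * diagonal D.diag = (k : ℂ) • c (B k) := by
    intro k hk
    rw [← hcS, ← map_mul, ← map_mul, ← map_sub, had k hk, map_smul]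
  have hsum := charpoly_sum_range_eq_of_diagonal h₀ had_diag K
  have hconj : ∀ X, (P⁻¹ * X * P).charpoly = X.charpoly := fun X => by
    simpa using charpoly_units_conj' hP.unit X
  rwa [← map_sum, Finset.sum_range_succ, hfin K le_rfl, add_zero, hc, hc, hconj, hconj] at hsum

/-- Levelt normal form: if `B 0 = S + N` is the Jordan–Chevalley decomposition
(`S` diagonalizable, `N` nilpotent, commuting) and `ad(S)(B k) = k • B k` for all
`k ≥ 1`, with `B k = 0` for `k ≥ K`, then `B(1) = ∑_{k<K} B k` has the same
characteristic polynomial as `B 0` (i.e. the same eigenvalues with multiplicity). -/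
theorem eigenvalues_of_levelt_sum
    (r : ℕ) (B : ℕ → Matrix (Fin r) (Fin r) ℂ)
    (S N : Matrix (Fin r) (Fin r) ℂ)
    (hB0 : B 0 = S + N)
    (hSN : S * N = N * S)
    (hN : IsNilpotent N)
    (hS : ∃ P D : Matrix (Fin r) (Fin r) ℂ, IsUnit P ∧ D.IsDiag ∧ S = P * D * P⁻¹)
    (K : ℕ) (hfin : ∀ k, K ≤ k → B k = 0)
    (had : ∀ k : ℕ, 1 ≤ k → S * B k - B k * S = (k : ℂ) • B k) :
    (∑ k ∈ Finset.range K, B k).charpoly = (B 0).charpoly :=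
  eigenvalues_of_levelt_sum_general r B S N hB0 hSN hS K hfin had
end

section
/- In the ring of formal Laurent series expansions, ι_{X,Y}{(X-Y)^{-1}} · ι_{X,Z}{(X-Z)^{-1}} + ι_{X,Y}{(X-Y)^{-1}} · ι_{Z,Y}{(Z-Y)^{-1}} = ι_{X,Z}{(X-Z)^{-1}} · ι_{Z,Y}{(Z-Y)^{-1}}; equivalently, comparing coefficients: ∑_{i,j≥0} X^{-2-i-j} Y^i Z^j + ∑_{i,j≥0} X^{-1-i} Y^{i+j} Z^{-1-j} = ∑_{i,j≥0} X^{-1-i} Y^j Z^{i-j-1} as formal distributions in three variables. -/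
/-!
All three double series have coefficients `0` or `1` and are supported on the plane
`a + b + c = -2` of exponents of `X^a Y^b Z^c`, where each support is cut out by two sign conditions:
`b, c ≥ 0` for `ι_{X,Y} ι_{X,Z}`, `a, c ≤ -1` for `ι_{X,Y} ι_{Z,Y}`, and `a ≤ -1, b ≥ 0` for
`ι_{X,Z} ι_{Z,Y}`. On that plane the third region is the disjoint union of the first two,
split according to the sign of `c`.
-/

theorem ite_add_ite_eq_ite_of_iff_or {M : Type*} [AddZeroClass M] {P Q R : Prop}
    [Decidable P] [Decidable Q] [Decidable R] (m : M) (hPQ : ¬(P ∧ Q)) (hR : R ↔ P ∨ Q) :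
    ((if P then m else 0) + if Q then m else 0) = if R then m else 0 := by
  by_cases hP : P <;> by_cases hQ : Q <;> simp_all

theorem exists_exponents_XY_XZ_iff (a b c : ℤ) :
    (∃ i j : ℕ, a = -2 - (i : ℤ) - (j : ℤ) ∧ b = (i : ℤ) ∧ c = (j : ℤ)) ↔
      a + b + c = -2 ∧ 0 ≤ b ∧ 0 ≤ c :=
  ⟨fun ⟨i, j, h⟩ => by omega, fun h => ⟨b.toNat, c.toNat, by omega⟩⟩

theorem exists_exponents_XY_ZY_iff (a b c : ℤ) :
    (∃ i j : ℕ, a = -1 - (i : ℤ) ∧ b = (i : ℤ) + (j : ℤ) ∧ c = -1 - (j : ℤ)) ↔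
      a + b + c = -2 ∧ a ≤ -1 ∧ c ≤ -1 :=
  ⟨fun ⟨i, j, h⟩ => by omega, fun h => ⟨(-1 - a).toNat, (-1 - c).toNat, by omega⟩⟩

theorem exists_exponents_XZ_ZY_iff (a b c : ℤ) :
    (∃ i j : ℕ, a = -1 - (i : ℤ) ∧ b = (j : ℤ) ∧ c = (i : ℤ) - (j : ℤ) - 1) ↔
      a + b + c = -2 ∧ a ≤ -1 ∧ 0 ≤ b :=
  ⟨fun ⟨i, j, h⟩ => by omega, fun h => ⟨(-1 - a).toNat, b.toNat, by omega⟩⟩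

open Classical in
/-- The three-variable partial fraction identity
`ι_{X,Y}{(X-Y)⁻¹}·ι_{X,Z}{(X-Z)⁻¹} + ι_{X,Y}{(X-Y)⁻¹}·ι_{Z,Y}{(Z-Y)⁻¹}
  = ι_{X,Z}{(X-Z)⁻¹}·ι_{Z,Y}{(Z-Y)⁻¹}`,
stated as the equality of the coefficients of `X^a Y^b Z^c` in the formal
distributions `∑_{i,j≥0} X^{-2-i-j} Y^i Z^j + ∑_{i,j≥0} X^{-1-i} Y^{i+j} Z^{-1-j}
  = ∑_{i,j≥0} X^{-1-i} Y^j Z^{i-j-1}`. -/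
theorem partial_fraction_formal_distribution_identity (a b c : ℤ) :
    ((if ∃ i j : ℕ, a = -2 - (i : ℤ) - (j : ℤ) ∧ b = (i : ℤ) ∧ c = (j : ℤ)
        then (1 : ℂ) else 0)
      + (if ∃ i j : ℕ, a = -1 - (i : ℤ) ∧ b = (i : ℤ) + (j : ℤ) ∧ c = -1 - (j : ℤ)
        then (1 : ℂ) else 0))
    = (if ∃ i j : ℕ, a = -1 - (i : ℤ) ∧ b = (j : ℤ) ∧ c = (i : ℤ) - (j : ℤ) - 1
        then (1 : ℂ) else 0) := by
  simp only [exists_exponents_XY_XZ_iff, exists_exponents_XY_ZY_iff, exists_exponents_XZ_ZY_iff]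
  exact ite_add_ite_eq_ite_of_iff_or 1 (by omega) (by omega)
end

section
/- As formal distributions, ∑_{i,j,k≥0} C(i,k) X^{-2-i-j} Y^k Z^{j+i-k} = ∑_{i,j≥0} C(-2-i, j) (-1)^j X^{-2-i-j} Y^i Z^j, where both sides equal the expansion ι_{X,Z,Y}{(X-Z-Y)^{-1}(X-Z)^{-1}} of (X-Z-Y)^{-1}(X-Z)^{-1} in the region |X| > |Z| > |Y|. -/
/-!
Both coefficients vanish unless `a = -2 - b - c` with `b, c ≥ 0`. In that case the triple sum
runs over `i + j = b + c`, `k = b`, and the hockey-stick identity gives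
`∑_{i ≤ b + c} C(i, b) = C(b + c + 1, b + 1)`, while upper negation gives
`C(-2 - b, c) (-1)^c = C(b + c + 1, c)`; the two agree by symmetry of binomial coefficients.
-/

open Finset

noncomputable def tripleSumCoeff (a b c : ℤ) : ℂ :=
  ∑' p : ℕ × ℕ × ℕ,
    if a = -2 - (p.1 : ℤ) - (p.2.1 : ℤ) ∧ b = (p.2.2 : ℤ) ∧
        c = (p.1 : ℤ) + (p.2.1 : ℤ) - (p.2.2 : ℤ)
      then ((p.1.choose p.2.2 : ℤ) : ℂ) else 0

noncomputable def doubleSumCoeff (a b c : ℤ) : ℂ :=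
  ∑' p : ℕ × ℕ,
    if a = -2 - (p.1 : ℤ) - (p.2 : ℤ) ∧ b = (p.1 : ℤ) ∧ c = (p.2 : ℤ)
      then ((Ring.choose (-2 - (p.1 : ℤ)) p.2 * (-1) ^ p.2 : ℤ) : ℂ) else 0

theorem Ring.choose_neg_two_sub_natCast_mul_neg_one_pow (m n : ℕ) :
    Ring.choose (-2 - (m : ℤ)) n * (-1) ^ n = ((m + n + 1).choose n : ℤ) := by
  have h : -2 - (m : ℤ) = -(m + 2 : ℕ) := by push_cast; ring
  rw [h, Ring.choose_neg, show ((m + 2 : ℕ) : ℤ) + n - 1 = (m + n + 1 : ℕ) by push_cast; ring,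
    Ring.choose_natCast, Units.smul_def, Int.coe_negOnePow_natCast, smul_eq_mul, mul_right_comm,
    ← mul_pow]
  simp

theorem doubleSumCoeff_natCast (m n : ℕ) :
    doubleSumCoeff (-2 - m - n) m n = (m + n + 1).choose n := by
  rw [doubleSumCoeff, tsum_eq_single (m, n)]
  · simp [Ring.choose_neg_two_sub_natCast_mul_neg_one_pow]
  · rintro ⟨i, j⟩ hij
    rw [if_neg]
    rintro ⟨-, hi, hj⟩
    exact hij (by simp_all)

theorem doubleSumCoeff_eq_zero {a b c : ℤ} (h : ¬ ∃ m n : ℕ, b = m ∧ c = n ∧ a = -2 - m - n) :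
    doubleSumCoeff a b c = 0 := by
  refine (tsum_congr fun p => if_neg ?_).trans tsum_zero
  rintro ⟨ha, hb, hc⟩
  exact h ⟨p.1, p.2, hb, hc, by omega⟩

theorem tripleSumCoeff_natCast (m n : ℕ) :
    tripleSumCoeff (-2 - m - n) m n = (m + n + 1).choose n := by
  -- terms with `i < m` vanish, so the fibre `i + j = m + n, k = m` is parametrised by
  -- `i = m + l` with `l ≤ n`
  rw [tripleSumCoeff, tsum_eq_sum (s := (range (n + 1)).image fun l => (m + l, n - l, m))]
  · rw [sum_image fun l _ l' _ h => by simpa using congrArg Prod.fst h,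
      sum_congr rfl (g := fun l => (((l + m).choose m : ℕ) : ℂ)) fun l hl => ?_]
    · exact_mod_cast by rw [Nat.sum_range_add_choose, show n + m + 1 = m + 1 + n by omega,
        Nat.choose_symm_add, add_right_comm]
    · have hln : l ≤ n := Nat.lt_succ_iff.1 (mem_range.1 hl)
      dsimp only
      rw [if_pos (by omega), add_comm]
      norm_cast
  · intro p hp
    rw [ite_eq_right_iff]
    rintro ⟨ha, hb, hc⟩
    have hlt : p.1 < m := by
      by_contra! hle
      refine hp (mem_image.2 ⟨p.1 - m, mem_range.2 (by omega), ?_⟩)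
      obtain ⟨i, j, k⟩ := p
      simp only [Prod.mk.injEq] at *
      omega
    rw [Nat.choose_eq_zero_of_lt (by omega), Nat.cast_zero, Int.cast_zero]

theorem tripleSumCoeff_eq_zero {a b c : ℤ} (h : ¬ ∃ m n : ℕ, b = m ∧ c = n ∧ a = -2 - m - n) :
    tripleSumCoeff a b c = 0 := by
  refine (tsum_congr fun p => ?_).trans tsum_zero
  rw [ite_eq_right_iff]
  rintro ⟨ha, hb, hc⟩
  have hlt : p.1 < p.2.2 := by
    by_contra! hle
    exact h ⟨p.2.2, p.1 + p.2.1 - p.2.2, hb, by omega, by omega⟩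
  simp [Nat.choose_eq_zero_of_lt hlt]

/-- Coefficient-wise equality of the two expansions of
`(X-Z-Y)⁻¹ (X-Z)⁻¹` in the region `|X| > |Z| > |Y|`:
`∑_{i,j,k≥0} C(i,k) X^{-2-i-j} Y^k Z^{j+i-k}
  = ∑_{i,j≥0} C(-2-i,j) (-1)^j X^{-2-i-j} Y^i Z^j`.
Both sides are read off as the coefficient of `X^a Y^b Z^c`. -/
theorem iterated_expansion_identity_one (a b c : ℤ) :
    (∑' p : ℕ × ℕ × ℕ,
        if a = -2 - (p.1 : ℤ) - (p.2.1 : ℤ) ∧ b = (p.2.2 : ℤ) ∧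
            c = (p.1 : ℤ) + (p.2.1 : ℤ) - (p.2.2 : ℤ)
          then ((p.1.choose p.2.2 : ℤ) : ℂ) else 0)
    = ∑' p : ℕ × ℕ,
        if a = -2 - (p.1 : ℤ) - (p.2 : ℤ) ∧ b = (p.1 : ℤ) ∧ c = (p.2 : ℤ)
          then ((Ring.choose (-2 - (p.1 : ℤ)) p.2 * (-1) ^ p.2 : ℤ) : ℂ) else 0 := by
  change tripleSumCoeff a b c = doubleSumCoeff a b c
  by_cases h : ∃ m n : ℕ, b = m ∧ c = n ∧ a = -2 - m - n
  · obtain ⟨m, n, rfl, rfl, rfl⟩ := h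
    rw [tripleSumCoeff_natCast, doubleSumCoeff_natCast]
  · rw [tripleSumCoeff_eq_zero h, doubleSumCoeff_eq_zero h]
end

section
/- Let g be a Lie algebra over ℂ acting on a vector space M, and let A, B be g-modules for a Lie algebra of the form g = V ⊗ ℂ[z, z^{-1}] with bracket [α z^m, β z^n] = ∑_{j≥0} C(m,j) (α_j β) z^{m+n-j}, where (V, α_j) are the modes of a vertex algebra. Define an action of g on the ℂ-vector space A ⊗_∞ B := ⊕_{(s,t) ∈ ℂ×ℕ} (A ⊗ B) by (α z^m)(v ⊗_{s,t} u) = v ⊗_{s,t} (α_m u) + ∑_{j≥0} C(m,j) (α_j v) ⊗_{s+m-j, t} u. Then this defines a g-module structure, i.e. [α z^m, β z^n](v ⊗_{s,t} u) = (α z^m)(β z^n)(v ⊗_{s,t} u) − (β z^n)(α z^m)(v ⊗_{s,t} u) for all α, β ∈ V, m, n ∈ ℤ, v ∈ A, u ∈ B, s ∈ ℂ, t ∈ ℕ. -/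
/-!
In the commutator of `α zᵐ` and `β zⁿ` on `v ⊗_{s,t} u` the cross terms, where one operator acts
on `u` and the other on `v`, cancel. The terms acting on `u` alone give the bracket by Borcherds'
formula on `B`. For the terms acting on `v` alone, Borcherds' formula on `A` leaves, for each
mode `α_k β`, the binomial identity
`∑_{i+j=r} C(m,i) C(i,k) C(n,j) = C(m,k) C(m+n-k, r-k)`,
which is `C(m,i) C(i,k) = C(m,k) C(m-k,i-k)` followed by Chu–Vandermonde.
-/

open Finset Filter
open scoped TensorProduct

theorem sum_range_sum_range_eq_sum_antidiagonal {M : Type*} [AddCommMonoid M] {L : ℕ}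
    {f : ℕ → ℕ → M} (hf : ∀ i j, L ≤ i + j → f i j = 0) :
    ∑ i ∈ range L, ∑ j ∈ range L, f i j = ∑ p ∈ range L, ∑ ij ∈ antidiagonal p, f ij.1 ij.2 := by
  calc ∑ i ∈ range L, ∑ j ∈ range L, f i j
      = ∑ i ∈ range L, ∑ j ∈ range (L - i), f i j := by
        refine sum_congr rfl fun i _ =>
          eventually_constant_sum (fun j hj => hf i j (by omega)) (Nat.sub_le L i)
    _ = ∑ p ∈ range L, ∑ i ∈ range (p + 1), f i (p - i) := (sum_range_diag_flip L f).symm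
    _ = _ := by simp only [Nat.sum_antidiagonal_eq_sum_range_succ_mk]

section Binomial

variable {R X : Type*} [CommRing R] [BinomialRing R] [AddCommGroup X] [Module R X]

theorem sum_range_choose_mul_choose_smul (a b : R) {L : ℕ} {G : ℕ → X}
    (hG : ∀ r, L ≤ r → G r = 0) :
    ∑ i ∈ range L, ∑ j ∈ range L, (Ring.choose a i * Ring.choose b j) • G (i + j)
      = ∑ p ∈ range L, Ring.choose (a + b) p • G p := by
  rw [sum_range_sum_range_eq_sum_antidiagonal fun i j h => by rw [hG _ h, smul_zero]]
  refine sum_congr rfl fun p _ => ?_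
  rw [Ring.add_choose_eq p (Commute.all a b), sum_smul]
  exact sum_congr rfl fun ij hij => by rw [mem_antidiagonal.mp hij]

theorem sum_range_choose_mul_choose_mul_choose_smul (m n : R) (k : ℕ) {L : ℕ} {G : ℕ → X}
    (hG : ∀ r, L ≤ r → G r = 0) :
    ∑ i ∈ range L, ∑ j ∈ range L,
        (Ring.choose m i * Ring.choose n j * Ring.choose (i : R) k) • G (i + j)
      = Ring.choose m k • ∑ p ∈ range L, Ring.choose (m + n - k) p • G (k + p) := by
  set f : ℕ → X := fun i => ∑ j ∈ range L,
    (Ring.choose m i * Ring.choose n j * Ring.choose (i : R) k) • G (i + j)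
  have hf_lt : ∀ i < k, f i = 0 := fun i hi => sum_eq_zero fun j _ => by
    rw [Ring.choose_natCast, Nat.choose_eq_zero_of_lt hi, Nat.cast_zero, mul_zero, zero_smul]
  have hf_ge : ∀ i, L ≤ i → f i = 0 := fun i hi => sum_eq_zero fun j _ => by
    rw [hG _ (by omega), smul_zero]
  have hf_shift : ∀ i, f (k + i) = Ring.choose m k • ∑ j ∈ range L,
      (Ring.choose (m - k) i * Ring.choose n j) • G (k + (i + j)) := fun i => by
    rw [smul_sum]
    refine sum_congr rfl fun j _ => ?_
    have h := Ring.choose_smul_choose m (Nat.le_add_right k i)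
    rw [Nat.add_sub_cancel_left, nsmul_eq_mul, ← Ring.choose_natCast] at h
    rw [smul_smul, add_assoc, mul_right_comm, mul_comm (Ring.choose m (k + i)), h, mul_assoc]
  calc ∑ i ∈ range L, f i = ∑ i ∈ range (k + L), f i :=
        (eventually_constant_sum hf_ge (by omega)).symm
    _ = ∑ i ∈ range L, f (k + i) := by
      rw [sum_range_add, sum_eq_zero fun i hi => hf_lt i (mem_range.mp hi), zero_add]
    _ = _ := by
      simp only [hf_shift, ← smul_sum]
      rw [sum_range_choose_mul_choose_smul _ _ fun r hr => hG _ (by omega), sub_add_eq_add_sub]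

end Binomial

theorem eventually_forall_apply_apply_eq_zero {V A : Type*} [AddCommGroup A] [Module ℂ A]
    {aA : V → ℤ → A →ₗ[ℂ] A} (hvan : ∀ γ w, ∀ᶠ j : ℕ in atTop, aA γ (j : ℤ) w = 0)
    (α β : V) (v : A) :
    ∀ᶠ i : ℕ in atTop, ∀ j : ℕ, aA α (i : ℤ) (aA β (j : ℤ) v) = 0 := by
  obtain ⟨M, hM⟩ := eventually_atTop.1 (hvan β v)
  filter_upwards [(eventually_all_finset (range M)).2 fun j _ => hvan α (aA β j v)] with i hi j
  by_cases hj : j < M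
  · exact hi j (mem_range.2 hj)
  · rw [hM j (not_lt.1 hj), map_zero]

theorem exists_common_vanishing_bound {V A : Type*} [AddCommGroup A] [Module ℂ A]
    (μ : V → ℕ → V → V) {aA : V → ℤ → A →ₗ[ℂ] A}
    (hvanA : ∀ (α : V) (v : A), ∃ N : ℤ, ∀ j, N ≤ j → aA α j v = 0) (α β : V) (v : A) (N : ℕ) :
    ∃ L : ℕ, ∀ r : ℕ, L ≤ r → aA α (r : ℤ) v = 0 ∧ aA β (r : ℤ) v = 0
      ∧ (∀ j : ℕ, aA α (r : ℤ) (aA β (j : ℤ) v) = 0) ∧ (∀ i : ℕ, aA β (r : ℤ) (aA α (i : ℤ) v) = 0)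
      ∧ (∀ k ∈ range N, aA (μ α k β) (r : ℤ) v = 0)
      ∧ ∀ k ∈ range N, aA (μ α k β) ((r : ℤ) - k) v = 0 := by
  have hev : ∀ γ w, ∀ᶠ j : ℕ in atTop, aA γ (j : ℤ) w = 0 := fun γ w =>
    tendsto_natCast_atTop_atTop.eventually (eventually_atTop.2 (hvanA γ w))
  have hev_sub : ∀ k : ℕ, ∀ᶠ r : ℕ in atTop, aA (μ α k β) ((r : ℤ) - k) v = 0 := fun k => by
    simpa only [← sub_eq_add_neg] using (tendsto_atTop_add_const_right _ (-(k : ℤ))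
      tendsto_natCast_atTop_atTop).eventually (eventually_atTop.2 (hvanA (μ α k β) v))
  exact eventually_atTop.1 <| (hev α v).and <| (hev β v).and <|
    (eventually_forall_apply_apply_eq_zero hev α β v).and <|
    (eventually_forall_apply_apply_eq_zero hev β α v).and <|
    ((eventually_all_finset (range N)).2 fun k _ => hev (μ α k β) v).and <|
    (eventually_all_finset (range N)).2 fun k _ => hev_sub k

section Action

variable {V A B : Type*} [AddCommGroup A] [Module ℂ A] [AddCommGroup B] [Module ℂ B]

def IsTensorInftyAction (aA : V → ℤ → A →ₗ[ℂ] A) (aB : V → ℤ → B →ₗ[ℂ] B)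
    (act : V → ℤ → ((ℂ × ℕ) →₀ (A ⊗[ℂ] B)) →ₗ[ℂ] ((ℂ × ℕ) →₀ (A ⊗[ℂ] B))) : Prop :=
  ∀ (α : V) (m : ℤ) (s : ℂ) (t : ℕ) (v : A) (u : B) (N : ℕ),
    (∀ j, N ≤ j → aA α (j : ℤ) v = 0) →
    act α m (Finsupp.single (s, t) (v ⊗ₜ[ℂ] u))
      = Finsupp.single (s, t) (v ⊗ₜ[ℂ] aB α m u)
        + ∑ j ∈ range N, Ring.choose m j •
            Finsupp.single (s + (m : ℂ) - (j : ℂ), t) ((aA α (j : ℤ) v) ⊗ₜ[ℂ] u)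

variable {aA : V → ℤ → A →ₗ[ℂ] A} {aB : V → ℤ → B →ₗ[ℂ] B}
  {act : V → ℤ → ((ℂ × ℕ) →₀ (A ⊗[ℂ] B)) →ₗ[ℂ] ((ℂ × ℕ) →₀ (A ⊗[ℂ] B))}

theorem IsTensorInftyAction.act_act_single (hact : IsTensorInftyAction aA aB act)
    {α β : V} {v : A} {L : ℕ} (hα : ∀ i, L ≤ i → aA α (i : ℤ) v = 0)
    (hβ : ∀ j, L ≤ j → aA β (j : ℤ) v = 0)
    (hαβ : ∀ i, L ≤ i → ∀ j : ℕ, aA α (i : ℤ) (aA β (j : ℤ) v) = 0)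
    (m n : ℤ) (s : ℂ) (t : ℕ) (u : B) :
    act α m (act β n (Finsupp.single (s, t) (v ⊗ₜ[ℂ] u)))
      = Finsupp.single (s, t) (v ⊗ₜ[ℂ] aB α m (aB β n u))
        + ∑ i ∈ range L, Ring.choose m i •
            Finsupp.single (s + (m : ℂ) - (i : ℂ), t) ((aA α (i : ℤ) v) ⊗ₜ[ℂ] aB β n u)
        + ∑ j ∈ range L, Ring.choose n j •
            Finsupp.single (s + (n : ℂ) - (j : ℂ), t) ((aA β (j : ℤ) v) ⊗ₜ[ℂ] aB α m u)
        + ∑ i ∈ range L, ∑ j ∈ range L, (Ring.choose m i * Ring.choose n j) •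
            Finsupp.single (s + ((m + n : ℤ) : ℂ) - ((i + j : ℕ) : ℂ), t)
              ((aA α (i : ℤ) (aA β (j : ℤ) v)) ⊗ₜ[ℂ] u) := by
  have hinner : ∀ j : ℕ,
      act α m (Finsupp.single (s + (n : ℂ) - (j : ℂ), t) (aA β (j : ℤ) v ⊗ₜ[ℂ] u))
      = Finsupp.single (s + (n : ℂ) - (j : ℂ), t) (aA β (j : ℤ) v ⊗ₜ[ℂ] aB α m u)
        + ∑ i ∈ range L, Ring.choose m i •
            Finsupp.single (s + ((m + n : ℤ) : ℂ) - ((i + j : ℕ) : ℂ), t)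
              ((aA α (i : ℤ) (aA β (j : ℤ) v)) ⊗ₜ[ℂ] u) := fun j => by
    rw [hact α m _ t _ u L fun i hi => hαβ i hi j]
    congr 2 with i
    push_cast
    ring_nf
  rw [hact β n s t v u L hβ, map_add, hact α m s t v _ L hα, map_sum]
  simp only [map_zsmul, hinner, smul_add, sum_add_distrib, smul_sum, smul_smul]
  rw [← add_assoc, sum_comm]
  simp only [mul_comm (Ring.choose n _)]

theorem IsTensorInftyAction.act_commutator_single (hact : IsTensorInftyAction aA aB act)
    {α β : V} {v : A} {L : ℕ} (hα : ∀ i, L ≤ i → aA α (i : ℤ) v = 0)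
    (hβ : ∀ j, L ≤ j → aA β (j : ℤ) v = 0)
    (hαβ : ∀ i, L ≤ i → ∀ j : ℕ, aA α (i : ℤ) (aA β (j : ℤ) v) = 0)
    (hβα : ∀ j, L ≤ j → ∀ i : ℕ, aA β (j : ℤ) (aA α (i : ℤ) v) = 0)
    (m n : ℤ) (s : ℂ) (t : ℕ) (u : B) :
    act α m (act β n (Finsupp.single (s, t) (v ⊗ₜ[ℂ] u)))
        - act β n (act α m (Finsupp.single (s, t) (v ⊗ₜ[ℂ] u)))
      = Finsupp.single (s, t) (v ⊗ₜ[ℂ] (aB α m (aB β n u) - aB β n (aB α m u)))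
        + ∑ i ∈ range L, ∑ j ∈ range L, (Ring.choose m i * Ring.choose n j) •
            Finsupp.single (s + ((m + n : ℤ) : ℂ) - ((i + j : ℕ) : ℂ), t)
              ((aA α (i : ℤ) (aA β (j : ℤ) v) - aA β (j : ℤ) (aA α (i : ℤ) v)) ⊗ₜ[ℂ] u) := by
  rw [hact.act_act_single hα hβ hαβ, hact.act_act_single hβ hα hβα]
  have hswap : ∑ j ∈ range L, ∑ i ∈ range L, (Ring.choose n j * Ring.choose m i) •
        Finsupp.single (s + ((n + m : ℤ) : ℂ) - ((j + i : ℕ) : ℂ), t)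
          ((aA β (j : ℤ) (aA α (i : ℤ) v)) ⊗ₜ[ℂ] u)
      = ∑ i ∈ range L, ∑ j ∈ range L, (Ring.choose m i * Ring.choose n j) •
        Finsupp.single (s + ((m + n : ℤ) : ℂ) - ((i + j : ℕ) : ℂ), t)
          ((aA β (j : ℤ) (aA α (i : ℤ) v)) ⊗ₜ[ℂ] u) := by
    rw [sum_comm]
    exact sum_congr rfl fun i _ => sum_congr rfl fun j _ => by
      rw [add_comm n m, add_comm j i, mul_comm]
  rw [hswap]
  simp only [TensorProduct.tmul_sub, TensorProduct.sub_tmul, Finsupp.single_sub, smul_sub,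
    sum_sub_distrib]
  abel

theorem sum_single_commutator_tmul_eq (μ : V → ℕ → V → V) {α β : V} {v : A} {N L : ℕ}
    (hA : ∀ m n : ℤ, aA α m (aA β n v) - aA β n (aA α m v)
      = ∑ j ∈ range N, Ring.choose m j • aA (μ α j β) (m + n - (j : ℤ)) v)
    (hvan : ∀ r, L ≤ r → ∀ k ∈ range N, aA (μ α k β) ((r : ℤ) - k) v = 0)
    (m n : ℤ) (s : ℂ) (t : ℕ) (u : B) :
    ∑ i ∈ range L, ∑ j ∈ range L, (Ring.choose m i * Ring.choose n j) •
        Finsupp.single (s + ((m + n : ℤ) : ℂ) - ((i + j : ℕ) : ℂ), t)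
          ((aA α (i : ℤ) (aA β (j : ℤ) v) - aA β (j : ℤ) (aA α (i : ℤ) v)) ⊗ₜ[ℂ] u)
      = ∑ k ∈ range N, Ring.choose m k • ∑ p ∈ range L, Ring.choose (m + n - k) p •
          Finsupp.single (s + ((m + n - k : ℤ) : ℂ) - (p : ℂ), t)
            ((aA (μ α k β) (p : ℤ) v) ⊗ₜ[ℂ] u) := by
  set G : ℕ → ℕ → (ℂ × ℕ) →₀ (A ⊗[ℂ] B) := fun k r =>
    Finsupp.single (s + ((m + n : ℤ) : ℂ) - (r : ℂ), t) (aA (μ α k β) ((r : ℤ) - k) v ⊗ₜ[ℂ] u)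
  have hG_shift : ∀ k p : ℕ, G k (k + p) = Finsupp.single (s + ((m + n - k : ℤ) : ℂ) - (p : ℂ), t)
      ((aA (μ α k β) (p : ℤ) v) ⊗ₜ[ℂ] u) := fun k p => by
    simp only [G]
    rw [show ((k + p : ℕ) : ℤ) - k = p by push_cast; ring,
      show s + ((m + n : ℤ) : ℂ) - ((k + p : ℕ) : ℂ) = s + ((m + n - k : ℤ) : ℂ) - (p : ℂ) by
        push_cast; ring]
  calc _ = ∑ i ∈ range L, ∑ j ∈ range L, ∑ k ∈ range N,
        (Ring.choose m i * Ring.choose n j * Ring.choose (i : ℤ) k) • G k (i + j) := by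
        refine sum_congr rfl fun i _ => sum_congr rfl fun j _ => ?_
        simp only [G, hA, TensorProduct.sum_tmul, Finsupp.single_finsetSum, smul_sum,
          ← TensorProduct.smul_tmul', ← Finsupp.smul_single, smul_smul, Nat.cast_add]
    _ = ∑ i ∈ range L, ∑ k ∈ range N, ∑ j ∈ range L,
        (Ring.choose m i * Ring.choose n j * Ring.choose (i : ℤ) k) • G k (i + j) :=
        sum_congr rfl fun i _ => sum_comm
    _ = ∑ k ∈ range N, ∑ i ∈ range L, ∑ j ∈ range L,
        (Ring.choose m i * Ring.choose n j * Ring.choose (i : ℤ) k) • G k (i + j) := sum_comm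
    _ = _ := by
        refine sum_congr rfl fun k hk => ?_
        rw [sum_range_choose_mul_choose_mul_choose_smul m n k
          fun r hr => by simp only [G, hvan r hr k hk, TensorProduct.zero_tmul,
            Finsupp.single_zero]]
        simp only [hG_shift]

end Action

theorem tensor_infty_is_module_general
    {V A B : Type*} [AddCommGroup V] [AddCommGroup A] [Module ℂ A] [AddCommGroup B] [Module ℂ B]
    (μ : V → ℕ → V → V)
    (aA : V → ℤ → A →ₗ[ℂ] A) (aB : V → ℤ → B →ₗ[ℂ] B)
    (hvanA : ∀ (α : V) (v : A), ∃ N, ∀ j, N ≤ j → aA α (j : ℤ) v = 0)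
    (hA : ∀ (α β : V) (N : ℕ), (∀ j, N ≤ j → μ α j β = 0) → ∀ (m n : ℤ) (v : A),
      aA α m (aA β n v) - aA β n (aA α m v)
        = ∑ j ∈ Finset.range N,
            ((Ring.choose m j : ℤ) : ℂ) • aA (μ α j β) (m + n - (j : ℤ)) v)
    (hB : ∀ (α β : V) (N : ℕ), (∀ j, N ≤ j → μ α j β = 0) → ∀ (m n : ℤ) (u : B),
      aB α m (aB β n u) - aB β n (aB α m u)
        = ∑ j ∈ Finset.range N,
            ((Ring.choose m j : ℤ) : ℂ) • aB (μ α j β) (m + n - (j : ℤ)) u)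
    (act : V → ℤ → ((ℂ × ℕ) →₀ (A ⊗[ℂ] B)) →ₗ[ℂ] ((ℂ × ℕ) →₀ (A ⊗[ℂ] B)))
    (hact : ∀ (α : V) (m : ℤ) (s : ℂ) (t : ℕ) (v : A) (u : B) (N : ℕ),
      (∀ j, N ≤ j → aA α (j : ℤ) v = 0) →
      act α m (Finsupp.single (s, t) (v ⊗ₜ[ℂ] u))
        = Finsupp.single (s, t) (v ⊗ₜ[ℂ] aB α m u)
          + ∑ j ∈ Finset.range N,
              ((Ring.choose m j : ℤ) : ℂ) •
                Finsupp.single (s + (m : ℂ) - (j : ℂ), t) ((aA α (j : ℤ) v) ⊗ₜ[ℂ] u)) :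
    ∀ (α β : V) (m n : ℤ) (s : ℂ) (t : ℕ) (v : A) (u : B) (N : ℕ),
      (∀ j, N ≤ j → μ α j β = 0) →
      act α m (act β n (Finsupp.single (s, t) (v ⊗ₜ[ℂ] u)))
          - act β n (act α m (Finsupp.single (s, t) (v ⊗ₜ[ℂ] u)))
        = ∑ j ∈ Finset.range N,
            ((Ring.choose m j : ℤ) : ℂ) •
              act (μ α j β) (m + n - (j : ℤ)) (Finsupp.single (s, t) (v ⊗ₜ[ℂ] u)) := by
  intro α β m n s t v u N hN
  have hact' : IsTensorInftyAction aA aB act := by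
    unfold IsTensorInftyAction; simpa only [Int.cast_smul_eq_zsmul] using hact
  simp only [Int.cast_smul_eq_zsmul] at hA hB ⊢
  obtain ⟨L, hL⟩ := exists_common_vanishing_bound μ hvanA α β v N
  simp only [imp_and, forall_and] at hL
  obtain ⟨hα, hβ, hαβ, hβα, hμ, hμ_sub⟩ := hL
  have hRHS : ∀ k ∈ range N, Ring.choose m k •
      act (μ α k β) (m + n - k) (Finsupp.single (s, t) (v ⊗ₜ[ℂ] u))
        = Finsupp.single (s, t) (v ⊗ₜ[ℂ] (Ring.choose m k • aB (μ α k β) (m + n - k) u))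
          + Ring.choose m k • ∑ p ∈ range L, Ring.choose (m + n - k) p •
            Finsupp.single (s + ((m + n - k : ℤ) : ℂ) - (p : ℂ), t)
              ((aA (μ α k β) (p : ℤ) v) ⊗ₜ[ℂ] u) := fun k hk => by
    rw [hact' _ _ s t v u L fun p hp => hμ p hp k hk, smul_add,
      TensorProduct.tmul_smul, Finsupp.smul_single]
  rw [hact'.act_commutator_single hα hβ hαβ hβα,
    sum_single_commutator_tmul_eq μ (hA α β N hN · · v) hμ_sub, sum_congr rfl hRHS,
    sum_add_distrib, hB α β N hN, TensorProduct.tmul_sum, Finsupp.single_finsetSum]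

/-- Lemma 4.3: the Lie algebra `V ⊗ ℂ[z,z⁻¹]` (with bracket
`[α zᵐ, β zⁿ] = ∑_{j≥0} C(m,j) (α_j β) z^{m+n-j}`) acts on
`A ⊗_∞ B = ⊕_{(s,t) ∈ ℂ×ℕ} A ⊗ B` by
`(α zᵐ)(v ⊗_{s,t} u) = v ⊗_{s,t} (α_m u) + ∑_{j≥0} C(m,j) (α_j v) ⊗_{s+m-j,t} u`:
any linear action `act` satisfying this formula on generators satisfies the
module (commutator) identity on generators. Here `μ α j β` denotes `α_j β`, and
`aA`, `aB` are the modes on `A` and `B`, satisfying the Borcherds commutator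
formula and the vanishing conditions making all sums finite. -/
theorem tensor_infty_is_module
    {V A B : Type*} [AddCommGroup V] [Module ℂ V] [AddCommGroup A] [Module ℂ A] [AddCommGroup B] [Module ℂ B]
    (μ : V → ℕ → V → V)
    (aA : V → ℤ → A →ₗ[ℂ] A) (aB : V → ℤ → B →ₗ[ℂ] B)
    (hvanV : ∀ α β : V, ∃ N, ∀ j, N ≤ j → μ α j β = 0)
    (hvanA : ∀ (α : V) (v : A), ∃ N, ∀ j, N ≤ j → aA α (j : ℤ) v = 0)
    (hA : ∀ (α β : V) (N : ℕ), (∀ j, N ≤ j → μ α j β = 0) → ∀ (m n : ℤ) (v : A),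
      aA α m (aA β n v) - aA β n (aA α m v)
        = ∑ j ∈ Finset.range N,
            ((Ring.choose m j : ℤ) : ℂ) • aA (μ α j β) (m + n - (j : ℤ)) v)
    (hB : ∀ (α β : V) (N : ℕ), (∀ j, N ≤ j → μ α j β = 0) → ∀ (m n : ℤ) (u : B),
      aB α m (aB β n u) - aB β n (aB α m u)
        = ∑ j ∈ Finset.range N,
            ((Ring.choose m j : ℤ) : ℂ) • aB (μ α j β) (m + n - (j : ℤ)) u)
    (act : V → ℤ → ((ℂ × ℕ) →₀ (A ⊗[ℂ] B)) →ₗ[ℂ] ((ℂ × ℕ) →₀ (A ⊗[ℂ] B)))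
    (hact : ∀ (α : V) (m : ℤ) (s : ℂ) (t : ℕ) (v : A) (u : B) (N : ℕ),
      (∀ j, N ≤ j → aA α (j : ℤ) v = 0) →
      act α m (Finsupp.single (s, t) (v ⊗ₜ[ℂ] u))
        = Finsupp.single (s, t) (v ⊗ₜ[ℂ] aB α m u)
          + ∑ j ∈ Finset.range N,
              ((Ring.choose m j : ℤ) : ℂ) •
                Finsupp.single (s + (m : ℂ) - (j : ℂ), t) ((aA α (j : ℤ) v) ⊗ₜ[ℂ] u)) :
    ∀ (α β : V) (m n : ℤ) (s : ℂ) (t : ℕ) (v : A) (u : B) (N : ℕ),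
      (∀ j, N ≤ j → μ α j β = 0) →
      act α m (act β n (Finsupp.single (s, t) (v ⊗ₜ[ℂ] u)))
          - act β n (act α m (Finsupp.single (s, t) (v ⊗ₜ[ℂ] u)))
        = ∑ j ∈ Finset.range N,
            ((Ring.choose m j : ℤ) : ℂ) •
              act (μ α j β) (m + n - (j : ℤ)) (Finsupp.single (s, t) (v ⊗ₜ[ℂ] u)) :=
  tensor_infty_is_module_general μ aA aB hvanA hA hB act hact
end

section
/- Let V be a vertex operator algebra and W = ⊕_{m∈ℕ} W_{(m)} an ℕ-gradable V-module that is C_1-cofinite, i.e. dim W/C_1(W) < ∞ where C_1(W) = span{α_{-1} w : α ∈ V with wt(α) ≥ 1, w ∈ W}. Let P_W be a finite-dimensional graded complement of C_1(W) in W. Then W = span_ℂ { α^1_{-1} ⋯ α^k_{-1} w : w ∈ P_W, α^j ∈ V_{≥1}, k ≥ 0 }; in particular W is a finitely generated V-module and each graded piece W_{(m)} is finite-dimensional. -/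
/-!
Since each operator in `T n` raises the degree by exactly `n`, the degree-`m` part of `f w`
is `f` applied to the degree-`(m - n)` part of `w`. Projecting `C₁(W) ⊔ P = W` onto degree `m`
therefore writes `W_(m)` as the images of the lower pieces `W_(m - n)`, `1 ≤ n ≤ m`, under `T n`,
plus the degree-`m` part of `P`. Strong induction on `m` then gives both the generation
statement and the finite-dimensionality of every `W_(m)`.
-/

open DirectSum Submodule

theorem Submodule.finite_map₂ {R M N P : Type*} [CommSemiring R] [AddCommMonoid M]
    [AddCommMonoid N] [AddCommMonoid P] [Module R M] [Module R N] [Module R P]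
    (f : M →ₗ[R] N →ₗ[R] P) (p : Submodule R M) (q : Submodule R N)
    [Module.Finite R p] [Module.Finite R q] : Module.Finite R (map₂ f p q) :=
  Module.Finite.iff_fg.mpr <|
    (Module.Finite.iff_fg.mp inferInstance).map₂ f (Module.Finite.iff_fg.mp inferInstance)

namespace DirectSum

section Semiring

variable {R M : Type*} [Semiring R] [AddCommMonoid M] [Module R M]
  (ℬ : ℕ → Submodule R M) [Decomposition ℬ]

def gradedProj (m : ℕ) : M →ₗ[R] M :=
  (ℬ m).subtype ∘ₗ component R ℕ (fun i => ℬ i) m ∘ₗ (decomposeLinearEquiv ℬ).toLinearMap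

variable {ℬ}

theorem gradedProj_mem (m : ℕ) (x : M) : gradedProj ℬ m x ∈ ℬ m :=
  (decompose ℬ x m).2

theorem gradedProj_of_mem_same {m : ℕ} {x : M} (hx : x ∈ ℬ m) : gradedProj ℬ m x = x :=
  decompose_of_mem_same ℬ hx

theorem gradedProj_of_mem_ne {k m : ℕ} {x : M} (hx : x ∈ ℬ k) (hkm : k ≠ m) :
    gradedProj ℬ m x = 0 :=
  decompose_of_mem_ne ℬ hx hkm

variable (ℬ) in
theorem range_gradedProj (m : ℕ) : LinearMap.range (gradedProj ℬ m) = ℬ m :=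
  le_antisymm (by rintro _ ⟨x, rfl⟩; exact gradedProj_mem m x)
    fun _ hx => ⟨_, gradedProj_of_mem_same hx⟩

theorem gradedProj_comp_of_le {f : Module.End R M} {n m : ℕ}
    (hf : ∀ k, ∀ w ∈ ℬ k, f w ∈ ℬ (k + n)) (hnm : n ≤ m) :
    gradedProj ℬ m ∘ₗ f = f ∘ₗ gradedProj ℬ (m - n) := by
  refine decompose_lhom_ext ℬ fun k => LinearMap.ext fun ⟨w, hw⟩ => ?_
  simp only [LinearMap.comp_apply, Submodule.subtype_apply]
  by_cases hk : k = m - n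
  · subst hk
    rw [gradedProj_of_mem_same hw,
      gradedProj_of_mem_same (Nat.sub_add_cancel hnm ▸ hf _ w hw)]
  · rw [gradedProj_of_mem_ne hw hk, map_zero, gradedProj_of_mem_ne (hf k w hw) (by omega)]

theorem gradedProj_comp_of_lt {f : Module.End R M} {n m : ℕ}
    (hf : ∀ k, ∀ w ∈ ℬ k, f w ∈ ℬ (k + n)) (hmn : m < n) :
    gradedProj ℬ m ∘ₗ f = 0 := by
  refine decompose_lhom_ext ℬ fun k => LinearMap.ext fun ⟨w, hw⟩ => ?_
  exact gradedProj_of_mem_ne (hf k w hw) (by omega)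

theorem map_gradedProj_le_of_eq_iSup_inf {P : Submodule R M} (hP : P = ⨆ k, P ⊓ ℬ k)
    (m : ℕ) : P.map (gradedProj ℬ m) ≤ P := by
  rw [map_le_iff_le_comap]
  nth_rewrite 1 [hP]
  refine iSup_le fun k x ⟨hxP, hxk⟩ => ?_
  by_cases hkm : k = m
  · subst hkm
    rwa [mem_comap, gradedProj_of_mem_same hxk]
  · rw [mem_comap, gradedProj_of_mem_ne hxk hkm]
    exact P.zero_mem

end Semiring

section CommSemiring

variable {R M : Type*} [CommSemiring R] [AddCommMonoid M] [Module R M]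
  (ℬ : ℕ → Submodule R M) (T : ℕ → Submodule R (Module.End R M))

/-- `C₁(W)`, when `T n = {α₋₁ : α ∈ V_n}`. -/
def positiveDegreeImage : Submodule R M :=
  ⨆ (n : ℕ) (_ : 1 ≤ n) (f : T n), LinearMap.range (f : Module.End R M)

def imageFromLowerDegrees (m : ℕ) : Submodule R M :=
  ⨆ n : Finset.Icc 1 m, map₂ LinearMap.id (T n) (ℬ (m - n))

variable {ℬ T} [Decomposition ℬ]

theorem map_gradedProj_range_le {n : ℕ} (hn : 1 ≤ n) {f : Module.End R M} (hfT : f ∈ T n)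
    (hf : ∀ k, ∀ w ∈ ℬ k, f w ∈ ℬ (k + n)) (m : ℕ) :
    (LinearMap.range f).map (gradedProj ℬ m) ≤ imageFromLowerDegrees ℬ T m := by
  rintro _ ⟨_, ⟨w, rfl⟩, rfl⟩
  rw [← LinearMap.comp_apply]
  rcases le_or_gt n m with hnm | hmn
  · rw [gradedProj_comp_of_le hf hnm, LinearMap.comp_apply]
    exact mem_iSup_of_mem ⟨n, Finset.mem_Icc.mpr ⟨hn, hnm⟩⟩ <|
      apply_mem_map₂ (LinearMap.id : Module.End R M →ₗ[R] Module.End R M) hfT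
        (gradedProj_mem (m - n) w)
  · rw [gradedProj_comp_of_lt hf hmn]
    exact zero_mem _

theorem le_imageFromLowerDegrees_sup_map_gradedProj
    (hT : ∀ n, ∀ f ∈ T n, ∀ k, ∀ w ∈ ℬ k, f w ∈ ℬ (k + n)) {P : Submodule R M}
    (hP : positiveDegreeImage T ⊔ P = ⊤) (m : ℕ) :
    ℬ m ≤ imageFromLowerDegrees ℬ T m ⊔ P.map (gradedProj ℬ m) :=
  calc ℬ m = (positiveDegreeImage T ⊔ P).map (gradedProj ℬ m) := by
        rw [hP, ← LinearMap.range_eq_map, range_gradedProj]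
    _ ≤ _ := by
      rw [Submodule.map_sup]
      refine sup_le_sup_right ?_ _
      simp only [positiveDegreeImage, Submodule.map_iSup, iSup_le_iff]
      exact fun n hn f => map_gradedProj_range_le hn f.2 (hT n f f.2) m

theorem eq_top_of_le_of_invariant
    (hT : ∀ n, ∀ f ∈ T n, ∀ k, ∀ w ∈ ℬ k, f w ∈ ℬ (k + n)) {P : Submodule R M}
    (hP : positiveDegreeImage T ⊔ P = ⊤)
    (hPhom : P = ⨆ m, P ⊓ ℬ m) {Q : Submodule R M} (hPQ : P ≤ Q)
    (hQ : ∀ n, 1 ≤ n → ∀ f ∈ T n, ∀ w ∈ Q, f w ∈ Q) : Q = ⊤ := by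
  have hℬQ : ∀ m, ℬ m ≤ Q := by
    intro m
    induction m using Nat.strong_induction_on with
    | _ m ih =>
      refine (le_imageFromLowerDegrees_sup_map_gradedProj hT hP m).trans (sup_le ?_ ?_)
      · refine iSup_le fun ⟨n, hn⟩ => map₂_le.mpr fun f hf w hw => ?_
        obtain ⟨hn1, hnm⟩ := Finset.mem_Icc.mp hn
        exact hQ n hn1 f hf w (ih (m - n) (by omega) hw)
      · exact (map_gradedProj_le_of_eq_iSup_inf hPhom m).trans hPQ
  rw [eq_top_iff, ← (Decomposition.isInternal ℬ).submodule_iSup_eq_top]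
  exact iSup_le hℬQ

end CommSemiring

section CommRing

variable {R M : Type*} [CommRing R] [IsNoetherianRing R] [AddCommGroup M] [Module R M]
  {ℬ : ℕ → Submodule R M} [Decomposition ℬ] {T : ℕ → Submodule R (Module.End R M)}

theorem finite_of_positiveDegreeImage_sup_eq_top [∀ n, Module.Finite R (T n)]
    (hT : ∀ n, ∀ f ∈ T n, ∀ k, ∀ w ∈ ℬ k, f w ∈ ℬ (k + n)) {P : Submodule R M}
    [Module.Finite R P]
    (hP : positiveDegreeImage T ⊔ P = ⊤) (m : ℕ) : Module.Finite R (ℬ m) := by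
  induction m using Nat.strong_induction_on with
  | _ m ih =>
    have : ∀ n : Finset.Icc 1 m, Module.Finite R (map₂ LinearMap.id (T n) (ℬ (m - n))) :=
      fun ⟨n, hn⟩ => by
        obtain ⟨hn1, hnm⟩ := Finset.mem_Icc.mp hn
        have := ih (m - n) (by omega)
        exact finite_map₂ _ _ _
    have : Module.Finite R (imageFromLowerDegrees ℬ T m) := finite_iSup _
    have := isNoetherian_of_le (le_imageFromLowerDegrees_sup_map_gradedProj hT hP m)
    infer_instance

end CommRing

end DirectSum

/-- Abstract form of Lemma 2.10/2.11 for a `C₁`-cofinite ℕ-gradable module `W`: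
`ℬ m` are the graded pieces (an internal direct sum decomposition), `T n`
(`n ≥ 1`) is the finite-dimensional space of operators `{α₋₁ : α ∈ V_n}`, raising
the grade by exactly `n`; `C₁(W)` is the span of their images, and `P` is a
finite-dimensional graded complement: `C₁(W) ⊔ P = W`.  Then `W` is spanned by
iterated applications of the operators to `P` (every submodule containing `P`
and stable under all the operators is everything), in particular `W` is finitely
generated, and every graded piece `ℬ m` is finite-dimensional. -/
theorem c1_cofinite_generation
    {W : Type*} [AddCommGroup W] [Module ℂ W]
    (ℬ : ℕ → Submodule ℂ W) (hdec : DirectSum.IsInternal ℬ)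
    (T : ℕ → Submodule ℂ (Module.End ℂ W))
    (hTfin : ∀ n, FiniteDimensional ℂ (T n))
    (hThom : ∀ n, ∀ f ∈ T n, ∀ m, ∀ w ∈ ℬ m, f w ∈ ℬ (m + n))
    (P : Submodule ℂ W) (hPfin : FiniteDimensional ℂ P)
    (hPhom : P = ⨆ m, (P ⊓ ℬ m))
    (hC1P : (⨆ (n : ℕ) (_ : 1 ≤ n) (f : T n), LinearMap.range (f : Module.End ℂ W))
        ⊔ P = ⊤) :
    (∀ Q : Submodule ℂ W, P ≤ Q →
        (∀ n, 1 ≤ n → ∀ f ∈ T n, ∀ w ∈ Q, f w ∈ Q) → Q = ⊤)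
    ∧ (∀ m, FiniteDimensional ℂ (ℬ m)) := by
  have := hdec.chooseDecomposition
  exact ⟨fun _ hPQ hQ => DirectSum.eq_top_of_le_of_invariant hThom hC1P hPhom hPQ hQ,
    DirectSum.finite_of_positiveDegreeImage_sup_eq_top hThom hC1P⟩
end

section
/- Let V be a VOA and W a C_1-cofinite ℕ-gradable V-module. Then the operator Ξ = L(0) − wt(·) (where wt(·) acts on the generalized L(0)-eigenspace W_s as multiplication by s) is a V-module endomorphism of W, and there exists K ∈ ℕ such that Ξ^K W = 0 and Ξ^K W^∨ = 0, where W^∨ is the contragredient module. -/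
/-!
Since `Ξ` is locally nilpotent, one power `Ξ ^ K` kills the finite-dimensional space `P`.
As `Ξ` preserves the grading and commutes with the grade-raising operators, `ker (Ξ ^ K)` is a
homogeneous submodule containing `P` and stable under every `T n`. The `C₁` condition
`W = ∑_{n ≥ 1} T n W + P` expresses each degree-`m` vector through `P` and vectors of degree
`< m`, so induction on the degree gives `ker (Ξ ^ K) = W`. On the contragredient module,
`(Ξ^*) ^ K = (Ξ ^ K)^* = 0`.
-/

open DirectSum

section GradedOperators

variable {R M : Type*} [Semiring R] [AddCommMonoid M] [Module R M]
  (ℬ : ℕ → Submodule R M) [Decomposition ℬ]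

theorem decompose_apply_of_mapsTo_add {f : M →ₗ[R] M} {n : ℕ}
    (hf : ∀ m, ∀ w ∈ ℬ m, f w ∈ ℬ (m + n)) (x : M) (m : ℕ) :
    (decompose ℬ (f x) m : M) = if n ≤ m then f (decompose ℬ x (m - n)) else 0 := by
  induction x using Decomposition.inductionOn ℬ with
  | zero => simp
  | @homogeneous k w =>
    by_cases hk : k + n = m
    · have hnm : n ≤ m := by omega
      have hmk : m - n = k := by omega
      rw [if_pos hnm, hmk, decompose_of_mem_same ℬ w.2, ← hk,
        decompose_of_mem_same ℬ (hf k w w.2)]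
    · rw [decompose_of_mem_ne ℬ (hf k w w.2) hk]
      split_ifs
      · rw [decompose_of_mem_ne ℬ w.2 (by omega), map_zero]
      · rfl
  | add x y hx hy =>
    simp only [map_add, decompose_add, DirectSum.add_apply, Submodule.coe_add, hx, hy]
    split_ifs <;> simp

theorem decompose_apply_of_mapsTo {f : M →ₗ[R] M} (hf : ∀ m, ∀ w ∈ ℬ m, f w ∈ ℬ m)
    (x : M) (m : ℕ) : (decompose ℬ (f x) m : M) = f (decompose ℬ x m) := by
  simpa using decompose_apply_of_mapsTo_add ℬ (n := 0) hf x m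

theorem isHomogeneous_ker_of_mapsTo {f : M →ₗ[R] M} (hf : ∀ m, ∀ w ∈ ℬ m, f w ∈ ℬ m) :
    SetLike.IsHomogeneous ℬ (LinearMap.ker f) := by
  intro m x hx
  rw [LinearMap.mem_ker, ← decompose_apply_of_mapsTo ℬ hf, LinearMap.mem_ker.mp hx]
  simp

theorem Submodule.eq_top_of_isHomogeneous_of_sup_range_eq_top
    {T : ℕ → Set (Module.End R M)} (hT : ∀ n, ∀ f ∈ T n, ∀ m, ∀ w ∈ ℬ m, f w ∈ ℬ (m + n))
    {P : Submodule R M}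
    (hgen : (⨆ (n : ℕ) (_ : 1 ≤ n) (f : T n), LinearMap.range (f : Module.End R M)) ⊔ P = ⊤)
    {N : Submodule R M} (hN : SetLike.IsHomogeneous ℬ N) (hPN : P ≤ N)
    (hTN : ∀ n, ∀ f ∈ T n, ∀ w ∈ N, f w ∈ N) : N = ⊤ := by
  suffices h : ∀ m, ℬ m ≤ N by
    rw [eq_top_iff, ← (Decomposition.isInternal ℬ).submodule_iSup_eq_top]
    exact iSup_le h
  intro m
  induction m using Nat.strong_induction_on with
  | _ m ih =>
  -- the vectors whose degree-`m` component lies in `N`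
  let Nm : Submodule R M := N.comap
    ((ℬ m).subtype ∘ₗ component R ℕ (ℬ ·) m ∘ₗ (decomposeLinearEquiv ℬ).toLinearMap)
  have hNm : Nm = ⊤ := by
    refine eq_top_iff.mpr (hgen ▸ sup_le (iSup₂_le fun n hn => iSup_le fun f => ?_)
      fun p hp => hN m (hPN hp))
    rintro _ ⟨x, rfl⟩
    show (decompose ℬ (f.1 x) m : M) ∈ N
    rw [decompose_apply_of_mapsTo_add ℬ (hT n f f.2) x m]
    split_ifs with hnm
    · exact hTN n f f.2 _ (ih (m - n) (by omega) (decompose ℬ x (m - n)).2)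
    · exact N.zero_mem
  intro w hw
  have hwm : w ∈ Nm := hNm ▸ Submodule.mem_top
  exact decompose_of_mem_same ℬ hw ▸ hwm

end GradedOperators

namespace Module.End

variable {R M : Type*} [Semiring R] [AddCommMonoid M] [Module R M]

theorem ker_pow_mono (f : Module.End R M) : Monotone fun k : ℕ => LinearMap.ker (f ^ k) := by
  intro a b hab
  dsimp only
  rw [← pow_sub_mul_pow f hab]
  exact LinearMap.ker_le_ker_comp (f ^ a) (f ^ (b - a))

theorem exists_le_ker_pow_of_fg {f : Module.End R M} {P : Submodule R M} (hP : P.FG)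
    (hf : P ≤ ⨆ k, LinearMap.ker (f ^ k)) : ∃ K, P ≤ LinearMap.ker (f ^ K) := by
  obtain ⟨s, hs⟩ := CompleteLattice.IsCompactElement.exists_finset_of_le_iSup _
    ((Submodule.fg_iff_compact P).mp hP) _ hf
  exact ⟨s.sup id, hs.trans (iSup₂_le fun k hk => f.ker_pow_mono (Finset.le_sup (f := id) hk))⟩

end Module.End

theorem LinearMap.dualMap_pow {R M : Type*} [CommSemiring R] [AddCommMonoid M] [Module R M]
    (f : Module.End R M) (n : ℕ) : f.dualMap ^ n = (f ^ n).dualMap := by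
  induction n with
  | zero => exact LinearMap.dualMap_id.symm
  | succ n ih =>
    rw [pow_succ, ih, pow_succ']
    exact LinearMap.dualMap_comp_dualMap (f ^ n) f

theorem xi_nilpotent_general
    {W : Type*} [AddCommGroup W] [Module ℂ W]
    (ℬ : ℕ → Submodule ℂ W) (hdec : DirectSum.IsInternal ℬ)
    (T : ℕ → Submodule ℂ (Module.End ℂ W))
    (hThom : ∀ n, ∀ f ∈ T n, ∀ m, ∀ w ∈ ℬ m, f w ∈ ℬ (m + n))
    (P : Submodule ℂ W) (hPfin : FiniteDimensional ℂ P)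
    (hC1P : (⨆ (n : ℕ) (_ : 1 ≤ n) (f : T n), LinearMap.range (f : Module.End ℂ W))
        ⊔ P = ⊤)
    (Ξ : Module.End ℂ W)
    (hΞhom : ∀ m, ∀ w ∈ ℬ m, Ξ w ∈ ℬ m)
    (hΞloc : ∀ m, ∀ w ∈ ℬ m, ∃ k : ℕ, (Ξ ^ k) w = 0)
    (hΞcomm : ∀ n, ∀ f ∈ T n, Commute Ξ f) :
    ∃ K : ℕ, (Ξ ^ K = 0) ∧
      ((Ξ.dualMap : Module.End ℂ (Module.Dual ℂ W)) ^ K = 0) := by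
  let := hdec.chooseDecomposition
  have hlocal : P ≤ ⨆ k, LinearMap.ker (Ξ ^ k) := by
    refine le_top.trans (hdec.submodule_iSup_eq_top ▸ iSup_le fun m w hw => ?_)
    obtain ⟨k, hk⟩ := hΞloc m w hw
    exact Submodule.mem_iSup_of_mem k hk
  obtain ⟨K, hK⟩ := Module.End.exists_le_ker_pow_of_fg (Module.Finite.iff_fg.mp hPfin) hlocal
  have hker : LinearMap.ker (Ξ ^ K) = ⊤ := by
    refine Submodule.eq_top_of_isHomogeneous_of_sup_range_eq_top ℬ
      (T := fun n => (T n : Set (Module.End ℂ W))) hThom hC1P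
      (isHomogeneous_ker_of_mapsTo ℬ ?_) hK ?_
    · intro m w hw
      rw [Module.End.coe_pow]
      exact Set.MapsTo.iterate (fun w hw => hΞhom m w hw) K hw
    · intro n f hf w hw
      rw [LinearMap.mem_ker, ← Module.End.mul_apply, ((hΞcomm n f hf).pow_left K).eq,
        Module.End.mul_apply, LinearMap.mem_ker.mp hw, map_zero]
  have hΞK : Ξ ^ K = 0 := LinearMap.ker_eq_top.mp hker
  exact ⟨K, hΞK, by rw [LinearMap.dualMap_pow, hΞK]; ext; simp⟩

/-- Abstract form of Lemma 2.12: for a `C₁`-cofinite ℕ-gradable module `W`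
(graded pieces `ℬ m` finite-dimensional, generated from a finite-dimensional
graded subspace `P` by the grade-raising operators `T n`, `n ≥ 1`), any
endomorphism `Ξ` (such as `Ξ = L(0) - wt(·)`) which preserves the grading,
commutes with the module action (i.e. with all operators in the `T n`), and is
locally nilpotent on each graded piece, is globally nilpotent: there is `K ∈ ℕ`
with `Ξ^K W = 0` and `Ξ^K W^∨ = 0` for the contragredient (dual) action. -/
theorem xi_nilpotent
    {W : Type*} [AddCommGroup W] [Module ℂ W]
    (ℬ : ℕ → Submodule ℂ W) (hdec : DirectSum.IsInternal ℬ)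
    (hfinB : ∀ m, FiniteDimensional ℂ (ℬ m))
    (T : ℕ → Submodule ℂ (Module.End ℂ W))
    (hThom : ∀ n, ∀ f ∈ T n, ∀ m, ∀ w ∈ ℬ m, f w ∈ ℬ (m + n))
    (P : Submodule ℂ W) (hPfin : FiniteDimensional ℂ P)
    (hPhom : P = ⨆ m, (P ⊓ ℬ m))
    (hC1P : (⨆ (n : ℕ) (_ : 1 ≤ n) (f : T n), LinearMap.range (f : Module.End ℂ W))
        ⊔ P = ⊤)
    (Ξ : Module.End ℂ W)
    (hΞhom : ∀ m, ∀ w ∈ ℬ m, Ξ w ∈ ℬ m)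
    (hΞloc : ∀ m, ∀ w ∈ ℬ m, ∃ k : ℕ, (Ξ ^ k) w = 0)
    (hΞcomm : ∀ n, ∀ f ∈ T n, Commute Ξ f) :
    ∃ K : ℕ, (Ξ ^ K = 0) ∧
      ((Ξ.dualMap : Module.End ℂ (Module.Dual ℂ W)) ^ K = 0) :=
  xi_nilpotent_general ℬ hdec T hThom P hPfin hC1P Ξ hΞhom hΞloc hΞcomm
end

section
/- Let A(z) = ∑_{k≥0} A_k (z−z_0)^k be a matrix power series over ℂ with radius of convergence R > 0, and let Y(z) = ∑_{k≥0} Y_k (z−z_0)^k be a formal matrix power series satisfying (z−z_0) Y'(z) = A(z) Y(z) formally, where additionally A_0 = 0 (so that the recursion k Y_k = ∑_{j<k} A_{k-j} Y_j determines Y_k for k ≥ 1 from Y_0). Then Y has radius of convergence at least R. -/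
/-!
The recursion gives `k ‖Y_k‖ ≤ ∑_{j<k} ‖A_{k-j}‖ ‖Y_j‖`. Fix `ρ < ρ₁ < R` and weight by `ρ₁ᵏ`:
with `a_m = ‖A_m‖ ρ₁ᵐ` summable of sum `S` and `b_k = ‖Y_k‖ ρ₁ᵏ`, we get `k b_k ≤ ∑_{j<k} a_{k-j} b_j`.
Once `k ≥ S`, this inequality shows `b_k` never exceeds the maximum of the earlier `b_j`, so `b` is
bounded, and `‖Y_k‖ ρᵏ = b_k (ρ/ρ₁)ᵏ` is dominated by a convergent geometric series.
-/

open Finset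

lemma sum_range_sub_le_tsum {a : ℕ → ℝ} (ha : ∀ m, 0 ≤ a m) (hsum : Summable a) (k : ℕ) :
    ∑ j ∈ range k, a (k - j) ≤ ∑' m, a m := by
  have hreflect : ∑ j ∈ range k, a (k - j) = ∑ j ∈ range k, a (j + 1) := by
    rw [← sum_range_reflect (fun j => a (j + 1)) k]
    refine sum_congr rfl fun j hj => congrArg a ?_
    have := mem_range.mp hj
    omega
  calc ∑ j ∈ range k, a (k - j)
      ≤ ∑ j ∈ range k, a (j + 1) + a 0 := by rw [hreflect]; linarith [ha 0]
    _ = ∑ m ∈ range (k + 1), a m := (sum_range_succ' a k).symm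
    _ ≤ ∑' m, a m := hsum.sum_le_tsum _ fun m _ => ha m

lemma exists_bound_of_natCast_mul_le_sum_mul {a b : ℕ → ℝ} (ha : ∀ m, 0 ≤ a m)
    (hb : ∀ k, 0 ≤ b k) (hsum : Summable a)
    (hrec : ∀ k : ℕ, (k : ℝ) * b k ≤ ∑ j ∈ range k, a (k - j) * b j) :
    ∃ M, ∀ k, b k ≤ M := by
  set S := ∑' m, a m
  set N := ⌈S⌉₊
  refine ⟨∑ j ∈ range (N + 1), b j, fun k => ?_⟩
  set M := ∑ j ∈ range (N + 1), b j
  induction k using Nat.strong_induction_on with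
  | _ k ih =>
    rcases le_or_gt k N with hkN | hNk
    · exact single_le_sum (fun j _ => hb j) (mem_range.mpr (Nat.lt_succ_of_le hkN))
    · have hSk : S < k := (Nat.le_ceil S).trans_lt (by exact_mod_cast hNk)
      have hM : 0 ≤ M := sum_nonneg fun j _ => hb j
      have hkb : (k : ℝ) * b k ≤ k * M :=
        calc (k : ℝ) * b k ≤ ∑ j ∈ range k, a (k - j) * b j := hrec k
          _ ≤ ∑ j ∈ range k, a (k - j) * M :=
              sum_le_sum fun j hj => mul_le_mul_of_nonneg_left (ih j (mem_range.mp hj)) (ha _)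
          _ = (∑ j ∈ range k, a (k - j)) * M := (sum_mul _ _ _).symm
          _ ≤ S * M := mul_le_mul_of_nonneg_right (sum_range_sub_le_tsum ha hsum k) hM
          _ ≤ k * M := mul_le_mul_of_nonneg_right hSk.le hM
      exact le_of_mul_le_mul_left hkb ((tsum_nonneg ha).trans_lt hSk)

lemma natCast_mul_mul_pow_le_sum {u x : ℕ → ℝ} {k : ℕ}
    (h : (k : ℝ) * x k ≤ ∑ j ∈ range k, u (k - j) * x j) {ρ : ℝ} (hρ : 0 ≤ ρ) :
    (k : ℝ) * (x k * ρ ^ k) ≤ ∑ j ∈ range k, u (k - j) * ρ ^ (k - j) * (x j * ρ ^ j) := by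
  have hsplit : ∀ j ∈ range k, u (k - j) * ρ ^ (k - j) * (x j * ρ ^ j) = u (k - j) * x j * ρ ^ k :=
    fun j hj => by
      rw [← Nat.sub_add_cancel (mem_range.mp hj).le, pow_add, Nat.add_sub_cancel]
      ring
  rw [sum_congr rfl hsplit, ← sum_mul, ← mul_assoc]
  exact mul_le_mul_of_nonneg_right h (pow_nonneg hρ k)

lemma summable_mul_pow_of_mul_pow_le {c : ℕ → ℝ} (hc : ∀ k, 0 ≤ c k) {ρ ρ₁ M : ℝ}
    (hρ : 0 ≤ ρ) (hρρ₁ : ρ < ρ₁) (hM : ∀ k, c k * ρ₁ ^ k ≤ M) :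
    Summable fun k => c k * ρ ^ k := by
  have hρ₁ : 0 < ρ₁ := hρ.trans_lt hρρ₁
  have hgeom : Summable fun k => M * (ρ / ρ₁) ^ k :=
    (summable_geometric_of_lt_one (by positivity) ((div_lt_one hρ₁).mpr hρρ₁)).mul_left M
  refine hgeom.of_nonneg_of_le (fun k => mul_nonneg (hc k) (pow_nonneg hρ k)) fun k => ?_
  calc c k * ρ ^ k = c k * ρ₁ ^ k * (ρ / ρ₁) ^ k := by
        rw [div_pow, mul_assoc, mul_div_cancel₀ _ (pow_ne_zero k hρ₁.ne')]
    _ ≤ M * (ρ / ρ₁) ^ k := mul_le_mul_of_nonneg_right (hM k) (by positivity)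

lemma natCast_mul_norm_le_sum_norm_mul_norm {𝕜 E F : Type*} [RCLike 𝕜]
    [NormedAddCommGroup E] [NormedSpace 𝕜 E] [NormedAddCommGroup F] [NormedSpace 𝕜 F]
    {A : ℕ → F →L[𝕜] F} {Y : ℕ → E →L[𝕜] F} {k : ℕ}
    (h : (k : 𝕜) • Y k = ∑ j ∈ range k, (A (k - j)).comp (Y j)) :
    (k : ℝ) * ‖Y k‖ ≤ ∑ j ∈ range k, ‖A (k - j)‖ * ‖Y j‖ :=
  calc (k : ℝ) * ‖Y k‖ = ‖(k : 𝕜) • Y k‖ := by rw [norm_smul, RCLike.norm_natCast]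
    _ = ‖∑ j ∈ range k, (A (k - j)).comp (Y j)‖ := by rw [h]
    _ ≤ ∑ j ∈ range k, ‖(A (k - j)).comp (Y j)‖ := norm_sum_le _ _
    _ ≤ ∑ j ∈ range k, ‖A (k - j)‖ * ‖Y j‖ := sum_le_sum fun j _ => (A _).opNorm_comp_le _

theorem formal_solution_radius_of_convergence_general
    (r : ℕ) (R : ℝ)
    (A Y : ℕ → ((Fin r → ℂ) →L[ℂ] (Fin r → ℂ)))
    (hA : ∀ ρ : ℝ, 0 ≤ ρ → ρ < R → Summable fun k => ‖A k‖ * ρ ^ k)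
    (hrec : ∀ k : ℕ, (k : ℂ) • Y k = ∑ j ∈ Finset.range k, (A (k - j)).comp (Y j)) :
    ∀ ρ : ℝ, 0 ≤ ρ → ρ < R → Summable fun k => ‖Y k‖ * ρ ^ k := by
  intro ρ hρ hρR
  obtain ⟨ρ₁, hρρ₁, hρ₁R⟩ := exists_between hρR
  have hρ₁ : 0 ≤ ρ₁ := hρ.trans hρρ₁.le
  obtain ⟨M, hM⟩ := exists_bound_of_natCast_mul_le_sum_mul
    (a := fun m => ‖A m‖ * ρ₁ ^ m) (b := fun k => ‖Y k‖ * ρ₁ ^ k)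
    (fun m => by positivity) (fun k => by positivity) (hA ρ₁ hρ₁ hρ₁R)
    fun k => natCast_mul_mul_pow_le_sum (u := fun m => ‖A m‖) (x := fun k => ‖Y k‖)
      (natCast_mul_norm_le_sum_norm_mul_norm (hrec k)) hρ₁
  exact summable_mul_pow_of_mul_pow_le (fun k => norm_nonneg _) hρ hρρ₁ hM

/-- Non-resonant convergence for formal solutions of Fuchsian systems
(Theorem 2.13 / Heu Theorem 1.6, case `A₀ = 0`): if
`A(z) = ∑ A_k (z-z₀)^k` has radius of convergence at least `R > 0` (matrices
identified with operators on `Fin r → ℂ`), `A 0 = 0`, and the formal power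
series `Y = ∑ Y_k (z-z₀)^k` satisfies `(z-z₀) Y' = A Y` formally, i.e.
`k • Y_k = ∑_{j<k} A_{k-j} Y_j` for all `k`, then `Y` also has radius of
convergence at least `R`. -/
theorem formal_solution_radius_of_convergence
    (r : ℕ) (R : ℝ) (hR : 0 < R)
    (A Y : ℕ → ((Fin r → ℂ) →L[ℂ] (Fin r → ℂ)))
    (hA : ∀ ρ : ℝ, 0 ≤ ρ → ρ < R → Summable fun k => ‖A k‖ * ρ ^ k)
    (hA0 : A 0 = 0)
    (hrec : ∀ k : ℕ, (k : ℂ) • Y k = ∑ j ∈ Finset.range k, (A (k - j)).comp (Y j)) :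
    ∀ ρ : ℝ, 0 ≤ ρ → ρ < R → Summable fun k => ‖Y k‖ * ρ ^ k :=
  formal_solution_radius_of_convergence_general r R A Y hA hrec
end

section
/- Let V be a VOA with V^∨ ≅ V, and suppose A and A^∨ are C_1-cofinite ℕ-gradable V-modules. Assume the fusion product ⊠ on the category of C_1-cofinite ℕ-gradable V-modules exists, is associative (B ⊠ (A ⊠ A^∨) ≅ (B ⊠ A) ⊠ A^∨), satisfies B ⊠ V ≅ B, and that there is a surjective intertwining map exhibiting V^∨ as a quotient of A ⊠ A^∨. Then for every nonzero C_1-cofinite ℕ-gradable V-module B, both A ⊠ B and B ⊠ A are nonzero. -/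
/-!
If `B ⊠ A = 0`, then `(B ⊠ A) ⊠ A^∨ ≅ B ⊠ (A ⊠ A^∨)` is zero, and it surjects onto
`B ⊠ V ≅ B`, so `B = 0`. The statement for `A ⊠ B` is the same argument applied to the
flipped bifunctor, with `A^∨ ⊠ A ↠ V` in place of `A ⊠ A^∨ ↠ V`.
-/

open CategoryTheory CategoryTheory.Limits

namespace CategoryTheory.Functor

variable {C : Type*} [Category C] [HasZeroMorphisms C] (F : C ⥤ C ⥤ C)

theorem isZero_of_isZero_obj_obj_of_epi {V A A' B : C}
    (hzero : ∀ X Y : C, IsZero X → IsZero ((F.obj X).obj Y))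
    (hepi : ∀ (X : C) {Y Z : C} (f : Y ⟶ Z), Epi f → Epi ((F.obj X).map f))
    (assoc : ∀ X Y Z : C,
      Nonempty ((F.obj ((F.obj X).obj Y)).obj Z ≅ (F.obj X).obj ((F.obj Y).obj Z)))
    (unitR : ∀ X : C, Nonempty ((F.obj X).obj V ≅ X))
    (e : (F.obj A).obj A' ⟶ V) (he : Epi e)
    (h : IsZero ((F.obj B).obj A)) : IsZero B := by
  have hBAA' : IsZero ((F.obj B).obj ((F.obj A).obj A')) :=
    (assoc B A A').some.isZero_iff.mp (hzero _ A' h)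
  have : Epi ((F.obj B).map e) := hepi B e he
  exact (unitR B).some.isZero_iff.mp (hBAA'.of_epi ((F.obj B).map e))

end CategoryTheory.Functor

/-- Corollary 4.12, abstractly: let `F` be a fusion-product bifunctor on a
category of modules (with zero morphisms) which preserves zero objects and
epimorphisms in each variable, admits associativity isomorphisms and unit
isomorphisms `X ⊠ V ≅ X`, `V ⊠ X ≅ X`, and suppose there are epimorphisms
`A ⊠ A^∨ ↠ V` and `A^∨ ⊠ A ↠ V` (coming from `V^∨ ≅ V` and skew-symmetry).
Then for every nonzero `B`, both `A ⊠ B` and `B ⊠ A` are nonzero. -/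
theorem fusion_with_rigid_nonzero
    {C : Type*} [Category C] [Limits.HasZeroMorphisms C]
    (F : C ⥤ C ⥤ C) (Vun A Adual : C)
    (hzero₁ : ∀ X Y : C, IsZero X → IsZero ((F.obj X).obj Y))
    (hzero₂ : ∀ X Y : C, IsZero X → IsZero ((F.obj Y).obj X))
    (hepi₂ : ∀ (X : C) {Y Z : C} (f : Y ⟶ Z), Epi f → Epi ((F.obj X).map f))
    (hepi₁ : ∀ (X : C) {Y Z : C} (f : Y ⟶ Z), Epi f → Epi ((F.map f).app X))
    (assoc : ∀ X Y Z : C,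
      Nonempty ((F.obj ((F.obj X).obj Y)).obj Z ≅ (F.obj X).obj ((F.obj Y).obj Z)))
    (unitR : ∀ X : C, Nonempty ((F.obj X).obj Vun ≅ X))
    (unitL : ∀ X : C, Nonempty ((F.obj Vun).obj X ≅ X))
    (e₁ : (F.obj A).obj Adual ⟶ Vun) (he₁ : Epi e₁)
    (e₂ : (F.obj Adual).obj A ⟶ Vun) (he₂ : Epi e₂)
    (B : C) (hB : ¬ IsZero B) :
    ¬ IsZero ((F.obj A).obj B) ∧ ¬ IsZero ((F.obj B).obj A) := by
  have hflipAssoc : ∀ X Y Z : C, Nonempty ((F.flip.obj ((F.flip.obj X).obj Y)).obj Z ≅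
      (F.flip.obj X).obj ((F.flip.obj Y).obj Z)) :=
    fun X Y Z => (assoc Z Y X).map Iso.symm
  exact ⟨fun h => hB <|
      F.flip.isZero_of_isZero_obj_obj_of_epi hzero₂ hepi₁ hflipAssoc unitL e₂ he₂ h,
    fun h => hB <| F.isZero_of_isZero_obj_obj_of_epi hzero₁ hepi₂ assoc unitR e₁ he₁ h⟩
end
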